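/- For a Bayesian network B with distribution Pr_B, and the associated PDG score ⟦M⟧_γ(μ) = Inc(μ) + γ·IDef(μ) with Inc(μ) = Σ_i β_i E_{pa∼μ}[D(μ(X_i | Pa(X_i)=pa) ‖ p_i(·|pa))] and IDef(μ) = Σ_i H_μ(X_i | Pa(X_i)) − H(μ): for every γ > 0 and all weights β_i > 0, Pr_B is the unique minimizer of ⟦M⟧_γ. -/

import Mathlib

open scoped Classical BigOperators

noncomputable section

/-- `μ` is a probability distribution on the finite set `W`. -/
def IsDist {W : Type*} [Fintype W] (μ : W → ℝ) : Prop :=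
  (∀ w, 0 ≤ μ w) ∧ ∑ w, μ w = 1

/-- Shannon entropy `H(μ)`. -/
def entropy {W : Type*} [Fintype W] (μ : W → ℝ) : ℝ :=
  ∑ w, Real.negMulLog (μ w)

/-- Relative entropy `D(μ‖ν)`, valued in `EReal` (`⊤` if not absolutely continuous). -/
def klE {W : Type*} [Fintype W] (μ ν : W → ℝ) : EReal :=
  if ∀ w, 0 < μ w → 0 < ν w then
    ((∑ w, if 0 < μ w then μ w * Real.log (μ w / ν w) else 0 : ℝ) : EReal)
  else ⊤

/-- Marginal probability of the event `f = a` under `μ`. -/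
def pm {W A : Type*} [Fintype W] (μ : W → ℝ) (f : W → A) (a : A) : ℝ :=
  ∑ w, if f w = a then μ w else 0

/-- Joint probability of `f = a` and `g = b` under `μ`. -/
def pm2 {W A B : Type*} [Fintype W] (μ : W → ℝ) (f : W → A) (g : W → B)
    (a : A) (b : B) : ℝ :=
  ∑ w, if f w = a ∧ g w = b then μ w else 0

/-- Conditional distribution of `g` given `f = a` under `μ`. -/
def condDist {W A B : Type*} [Fintype W] (μ : W → ℝ) (f : W → A) (g : W → B)
    (a : A) : B → ℝ :=
  fun b => pm2 μ f g a b / pm μ f a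

/-- Conditional entropy `H(g | f)` under `μ`. -/
def condEnt {W A B : Type*} [Fintype W] [Fintype A] [Fintype B]
    (μ : W → ℝ) (f : W → A) (g : W → B) : ℝ :=
  ∑ a, ∑ b, if 0 < pm2 μ f g a b then
    -(pm2 μ f g a b * Real.log (pm2 μ f g a b / pm μ f a)) else 0

/-!
Where `μ` is absolutely continuous with respect to every cpd, the `Inc` part of the score is a
weighted sum of expected divergences `R_i = E_μ D(μ(X_i | Pa_i) ‖ p_i) ≥ 0`, and
`IDef(μ) = D(μ ‖ Π_i μ(x_i | pa_i))` is nonnegative because that product of conditionals, taken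
along the topological order, has total mass at most `1`. The logarithms telescope:
`Σ_i R_i + IDef(μ) = D(μ ‖ Pr_B)`. With all weights positive, the score therefore vanishes exactly
when `D(μ ‖ Pr_B) = 0`, i.e. (Gibbs) when `μ = Pr_B`. If instead `μ` charges a value of some
`(Pa_i, X_i)` to which `p_i` gives probability `0`, then `Inc(μ) = ⊤`.
-/

section Gibbs

variable {W : Type*} [Fintype W]

def klSum (μ ν : W → ℝ) : ℝ :=
  ∑ w, if 0 < μ w then μ w * Real.log (μ w / ν w) else 0

lemma klE_eq_klSum {μ ν : W → ℝ} (h : ∀ w, 0 < μ w → 0 < ν w) : klE μ ν = klSum μ ν :=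
  if_pos h

lemma klE_eq_top {μ ν : W → ℝ} (h : ¬ ∀ w, 0 < μ w → 0 < ν w) : klE μ ν = ⊤ :=
  if_neg h

lemma klSum_eq_sum_mul_log {μ : W → ℝ} (hμ : ∀ w, 0 ≤ μ w) (ν : W → ℝ) :
    klSum μ ν = ∑ w, μ w * Real.log (μ w / ν w) := by
  refine Finset.sum_congr rfl fun w _ => ?_
  rcases (hμ w).lt_or_eq with hw | hw
  · rw [if_pos hw]
  · simp [← hw]

lemma klSum_self (μ : W → ℝ) : klSum μ μ = 0 :=
  Finset.sum_eq_zero fun w _ => by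
    split_ifs with h
    · rw [div_self h.ne', Real.log_one, mul_zero]
    · rfl

lemma sub_lt_mul_log_div {a b : ℝ} (ha : 0 < a) (hb : 0 < b) (hab : a ≠ b) :
    a - b < a * Real.log (a / b) := by
  have h := Real.log_lt_sub_one_of_pos (div_pos hb ha)
    (by rw [Ne, div_eq_one_iff_eq ha.ne']; exact hab.symm)
  calc a - b = -(a * (b / a - 1)) := by field_simp; ring
    _ < -(a * Real.log (b / a)) := neg_lt_neg (mul_lt_mul_of_pos_left h ha)
    _ = a * Real.log (a / b) := by rw [← mul_neg, ← Real.log_inv, inv_div]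

lemma sub_le_mul_log_div {a b : ℝ} (ha : 0 < a) (hb : 0 < b) : a - b ≤ a * Real.log (a / b) := by
  rcases eq_or_ne a b with rfl | hab
  · simp [div_self ha.ne']
  · exact (sub_lt_mul_log_div ha hb hab).le

lemma sub_le_ite_mul_log_div {a b : ℝ} (hb : 0 ≤ b) (hab : 0 < a → 0 < b) :
    a - b ≤ if 0 < a then a * Real.log (a / b) else 0 := by
  split_ifs with ha
  · exact sub_le_mul_log_div ha (hab ha)
  · linarith

variable {μ ν : W → ℝ}

lemma sum_sub_sum_le_klSum (hν : ∀ w, 0 ≤ ν w) (habs : ∀ w, 0 < μ w → 0 < ν w) :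
    ∑ w, μ w - ∑ w, ν w ≤ klSum μ ν := by
  rw [← Finset.sum_sub_distrib]
  exact Finset.sum_le_sum fun w _ => sub_le_ite_mul_log_div (hν w) (habs w)

lemma klSum_pos_of_sum_eq (hμ : ∀ w, 0 ≤ μ w) (hν : ∀ w, 0 ≤ ν w)
    (habs : ∀ w, 0 < μ w → 0 < ν w) (hsum : ∑ w, μ w = ∑ w, ν w) (hne : μ ≠ ν) : 0 < klSum μ ν := by
  obtain ⟨w, hw, hwne⟩ : ∃ w, 0 < μ w ∧ μ w ≠ ν w := by
    by_contra! h
    have hle : ∀ w ∈ Finset.univ, μ w ≤ ν w := fun w _ =>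
      (hμ w).lt_or_eq.elim (fun hw => (h w hw).le) fun hw => hw ▸ hν w
    exact hne (funext fun w => (Finset.sum_eq_sum_iff_of_le hle).1 hsum w (Finset.mem_univ w))
  rw [← sub_eq_zero.2 hsum, ← Finset.sum_sub_distrib]
  refine Finset.sum_lt_sum (fun w _ => sub_le_ite_mul_log_div (hν w) (habs w))
    ⟨w, Finset.mem_univ w, ?_⟩
  rw [if_pos hw]
  exact sub_lt_mul_log_div hw (habs w hw) hwne

end Gibbs

section Marginals

variable {W A B : Type*} [Fintype W] {μ : W → ℝ} (f : W → A) (g : W → B)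

lemma pm_nonneg (hμ : ∀ w, 0 ≤ μ w) (a : A) : 0 ≤ pm μ f a :=
  Finset.sum_nonneg fun w _ => by split_ifs <;> simp [hμ w]

lemma pm2_nonneg (hμ : ∀ w, 0 ≤ μ w) (a : A) (b : B) : 0 ≤ pm2 μ f g a b :=
  Finset.sum_nonneg fun w _ => by split_ifs <;> simp [hμ w]

lemma le_pm2 (hμ : ∀ w, 0 ≤ μ w) (w : W) : μ w ≤ pm2 μ f g (f w) (g w) := by
  simpa [pm2] using Finset.single_le_sum
    (f := fun w' => if f w' = f w ∧ g w' = g w then μ w' else 0)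
    (fun w' _ => by split_ifs <;> simp [hμ w']) (Finset.mem_univ w)

lemma condDist_nonneg (hμ : ∀ w, 0 ≤ μ w) (a : A) (b : B) : 0 ≤ condDist μ f g a b :=
  div_nonneg (pm2_nonneg f g hμ a b) (pm_nonneg f hμ a)

variable [Fintype B]

lemma sum_pm2 (a : A) : ∑ b, pm2 μ f g a b = pm μ f a := by
  unfold pm2 pm
  rw [Finset.sum_comm]
  refine Finset.sum_congr rfl fun w _ => ?_
  by_cases h : f w = a <;> simp [h]

lemma pm2_le_pm (hμ : ∀ w, 0 ≤ μ w) (a : A) (b : B) : pm2 μ f g a b ≤ pm μ f a := by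
  rw [← sum_pm2 f g a]
  exact Finset.single_le_sum (fun b _ => pm2_nonneg f g hμ a b) (Finset.mem_univ b)

lemma condDist_pos_iff (hμ : ∀ w, 0 ≤ μ w) (a : A) (b : B) :
    0 < condDist μ f g a b ↔ 0 < pm2 μ f g a b := by
  refine ⟨fun h => (pm2_nonneg f g hμ a b).lt_of_ne fun h0 => ?_, fun h =>
    div_pos h (h.trans_le (pm2_le_pm f g hμ a b))⟩
  simp [condDist, ← h0] at h

lemma pm_mul_condDist (hμ : ∀ w, 0 ≤ μ w) (a : A) (b : B) :
    pm μ f a * condDist μ f g a b = pm2 μ f g a b := by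
  rcases eq_or_ne (pm μ f a) 0 with h | h
  · rw [h, zero_mul]
    exact (le_antisymm (h ▸ pm2_le_pm f g hμ a b) (pm2_nonneg f g hμ a b)).symm
  · exact mul_div_cancel₀ _ h

lemma sum_condDist {a : A} (ha : pm μ f a ≠ 0) : ∑ b, condDist μ f g a b = 1 := by
  simp only [condDist]
  rw [← Finset.sum_div, sum_pm2, div_self ha]

lemma sum_condDist_le_one (a : A) : ∑ b, condDist μ f g a b ≤ 1 := by
  rcases eq_or_ne (pm μ f a) 0 with ha | ha
  · simp [condDist, ha]
  · exact (sum_condDist f g ha).le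

lemma sum_sum_pm2_mul [Fintype A] (φ : A → B → ℝ) :
    ∑ a, ∑ b, pm2 μ f g a b * φ a b = ∑ w, μ w * φ (f w) (g w) := by
  simp only [pm2, Finset.sum_mul, ite_mul, zero_mul]
  simp_rw [Finset.sum_comm (s := (Finset.univ : Finset B)) (t := (Finset.univ : Finset W))]
  rw [Finset.sum_comm]
  refine Finset.sum_congr rfl fun w _ => ?_
  simp [ite_and]

end Marginals

lemma EReal.coe_finset_sum {ι : Type*} (s : Finset ι) (f : ι → ℝ) :
    ((∑ i ∈ s, f i : ℝ) : EReal) = ∑ i ∈ s, (f i : EReal) :=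
  map_sum (⟨⟨(↑), EReal.coe_zero⟩, EReal.coe_add⟩ : ℝ →+ EReal) f s

lemma EReal.sum_eq_top_of_nonneg {ι : Type*} {s : Finset ι} {F : ι → EReal}
    (hF : ∀ i ∈ s, 0 ≤ F i) {i : ι} (hi : i ∈ s) (htop : F i = ⊤) : ∑ j ∈ s, F j = ⊤ :=
  top_le_iff.1 (htop ▸ Finset.single_le_sum hF hi)

section CondKL

variable {W A B : Type*} [Fintype W] [Fintype B] {μ : W → ℝ} (f : W → A) (g : W → B)

lemma pm_mul_klSum_condDist (hμ : ∀ w, 0 ≤ μ w) (ν : A → B → ℝ) (a : A) :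
    pm μ f a * klSum (condDist μ f g a) (ν a)
      = ∑ b, pm2 μ f g a b * Real.log (condDist μ f g a b / ν a b) := by
  rw [klSum_eq_sum_mul_log (condDist_nonneg f g hμ a), Finset.mul_sum]
  simp_rw [← mul_assoc, pm_mul_condDist f g hμ]

lemma pm_mul_klSum_condDist_nonneg (hμ : ∀ w, 0 ≤ μ w) {ν : B → ℝ} (hν : IsDist ν) {a : A}
    (habs : ∀ b, 0 < condDist μ f g a b → 0 < ν b) :
    0 ≤ pm μ f a * klSum (condDist μ f g a) ν := by
  rcases eq_or_ne (pm μ f a) 0 with ha | ha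
  · rw [ha, zero_mul]
  · have hgibbs := sum_sub_sum_le_klSum hν.1 habs
    rw [sum_condDist f g ha, hν.2, sub_self] at hgibbs
    exact mul_nonneg (pm_nonneg f hμ a) hgibbs

lemma pm_mul_klE_condDist_nonneg (hμ : ∀ w, 0 ≤ μ w) {ν : B → ℝ} (hν : IsDist ν) (a : A) :
    0 ≤ (pm μ f a : EReal) * klE (condDist μ f g a) ν := by
  by_cases habs : ∀ b, 0 < condDist μ f g a b → 0 < ν b
  · rw [klE_eq_klSum habs, ← EReal.coe_mul]
    exact EReal.coe_nonneg.2 (pm_mul_klSum_condDist_nonneg f g hμ hν habs)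
  · rw [klE_eq_top habs]
    exact EReal.mul_nonneg (EReal.coe_nonneg.2 (pm_nonneg f hμ a)) le_top

variable [Fintype A]

def condKL (μ : W → ℝ) (f : W → A) (g : W → B) (ν : A → B → ℝ) : ℝ :=
  ∑ a, pm μ f a * klSum (condDist μ f g a) (ν a)

lemma condKL_eq_sum_mul_log (hμ : ∀ w, 0 ≤ μ w) (ν : A → B → ℝ) :
    condKL μ f g ν
      = ∑ w, μ w * Real.log (condDist μ f g (f w) (g w) / ν (f w) (g w)) := by
  simp_rw [condKL, pm_mul_klSum_condDist f g hμ]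
  exact sum_sum_pm2_mul f g fun a b => Real.log (condDist μ f g a b / ν a b)

lemma condKL_nonneg (hμ : ∀ w, 0 ≤ μ w) {ν : A → B → ℝ} (hν : ∀ a, IsDist (ν a))
    (habs : ∀ a b, 0 < pm2 μ f g a b → 0 < ν a b) : 0 ≤ condKL μ f g ν :=
  Finset.sum_nonneg fun a _ => pm_mul_klSum_condDist_nonneg f g hμ (hν a)
    fun b hb => habs a b ((condDist_pos_iff f g hμ a b).1 hb)

lemma sum_pm_mul_klE_condDist_of_absCont (hμ : ∀ w, 0 ≤ μ w) {ν : A → B → ℝ}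
    (habs : ∀ a b, 0 < pm2 μ f g a b → 0 < ν a b) :
    ∑ a, (pm μ f a : EReal) * klE (condDist μ f g a) (ν a) = condKL μ f g ν := by
  rw [condKL, EReal.coe_finset_sum]
  refine Finset.sum_congr rfl fun a _ => ?_
  rw [klE_eq_klSum fun b hb => habs a b ((condDist_pos_iff f g hμ a b).1 hb), EReal.coe_mul]

lemma sum_pm_mul_klE_condDist_eq_top (hμ : ∀ w, 0 ≤ μ w) {ν : A → B → ℝ}
    (hν : ∀ a, IsDist (ν a)) {a : A} {b : B} (hpos : 0 < pm2 μ f g a b) (hν0 : ¬ 0 < ν a b) :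
    ∑ a, (pm μ f a : EReal) * klE (condDist μ f g a) (ν a) = ⊤ := by
  refine EReal.sum_eq_top_of_nonneg (fun a _ => pm_mul_klE_condDist_nonneg f g hμ (hν a) a)
    (Finset.mem_univ a) ?_
  rw [klE_eq_top fun h => hν0 (h b ((condDist_pos_iff f g hμ a b).2 hpos)),
    EReal.coe_mul_top_of_pos (hpos.trans_le (pm2_le_pm f g hμ a b))]

lemma condEnt_eq_sum_mul_neg_log (hμ : ∀ w, 0 ≤ μ w) :
    condEnt μ f g = ∑ w, μ w * -Real.log (condDist μ f g (f w) (g w)) := by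
  rw [← sum_sum_pm2_mul f g fun a b => -Real.log (condDist μ f g a b), condEnt]
  refine Finset.sum_congr rfl fun a _ => Finset.sum_congr rfl fun b _ => ?_
  rcases (pm2_nonneg f g hμ a b).lt_or_eq with h | h
  · rw [if_pos h, mul_neg]
    rfl
  · rw [← h]
    simp

end CondKL

lemma entropy_eq_sum_mul_neg_log {W : Type*} [Fintype W] (μ : W → ℝ) :
    entropy μ = ∑ w, μ w * -Real.log (μ w) :=
  Finset.sum_congr rfl fun w _ => by rw [Real.negMulLog, neg_mul, mul_neg]

section ChainRule

def DependsOnPredecessors {n : ℕ} {V : Fin n → Type*} (c : (i : Fin n) → (∀ j, V j) → V i → ℝ) :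
    Prop :=
  ∀ i w w', (∀ j < i, w j = w' j) → c i w = c i w'

variable {n : ℕ}

lemma DependsOnPredecessors.tail {V : Fin (n + 1) → Type*}
    {c : (i : Fin (n + 1)) → (∀ j, V j) → V i → ℝ} (hc : DependsOnPredecessors c) (x : V 0) :
    DependsOnPredecessors (V := fun i => V i.succ) fun i w => c i.succ (Fin.cons x w) := by
  intro i w w' h
  refine hc i.succ _ _ fun j hj => ?_
  cases j using Fin.cases with
  | zero => rfl
  | succ k => exact h k (Fin.succ_lt_succ_iff.1 hj)

lemma sum_prod_kernels_succ {V : Fin (n + 1) → Type*} [∀ i, Fintype (V i)]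
    {c : (i : Fin (n + 1)) → (∀ j, V j) → V i → ℝ} (hc : DependsOnPredecessors c) (w₀ : ∀ j, V j) :
    ∑ w, ∏ i, c i w (w i)
      = ∑ x, c 0 w₀ x * ∑ w : ∀ i : Fin n, V i.succ, ∏ i, c i.succ (Fin.cons x w) (w i) := by
  rw [← (Fin.consEquiv V).sum_comp, Fintype.sum_prod_type]
  refine Finset.sum_congr rfl fun x _ => ?_
  rw [Finset.mul_sum]
  refine Finset.sum_congr rfl fun w _ => ?_
  rw [Fin.prod_univ_succ, hc 0 _ w₀ fun j hj => absurd hj (Fin.not_lt_zero j)]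
  simp [Fin.consEquiv]

variable {V : Fin n → Type*} [∀ i, Fintype (V i)] [∀ i, Nonempty (V i)]
  {c : (i : Fin n) → (∀ j, V j) → V i → ℝ}

lemma sum_prod_kernels_eq_one (hc : DependsOnPredecessors c) (h1 : ∀ i w, ∑ x, c i w x = 1) :
    ∑ w, ∏ i, c i w (w i) = 1 := by
  induction n with
  | zero => simp
  | succ n ih =>
    rw [sum_prod_kernels_succ hc (Classical.arbitrary _)]
    simp_rw [ih (hc.tail _) fun i w => h1 _ _, mul_one]
    exact h1 0 _

lemma sum_prod_kernels_le_one (hc : DependsOnPredecessors c) (h0 : ∀ i w x, 0 ≤ c i w x)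
    (h1 : ∀ i w, ∑ x, c i w x ≤ 1) : ∑ w, ∏ i, c i w (w i) ≤ 1 := by
  induction n with
  | zero => simp
  | succ n ih =>
    set w₀ : ∀ j, V j := Classical.arbitrary _
    rw [sum_prod_kernels_succ hc w₀]
    calc _ ≤ ∑ x, c 0 w₀ x * 1 := Finset.sum_le_sum fun x _ =>
          mul_le_mul_of_nonneg_left (ih (hc.tail x) (fun i w => h0 _ _) fun i w => h1 _ _)
            (h0 0 w₀ x)
      _ ≤ 1 := by simpa using h1 0 w₀

end ChainRule

lemma sum_mul_add_mul_eq_zero_iff {ι : Type*} {s : Finset ι} {R β : ι → ℝ} {ρ γ : ℝ}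
    (hR : ∀ i ∈ s, 0 ≤ R i) (hρ : 0 ≤ ρ) (hβ : ∀ i ∈ s, 0 < β i) (hγ : 0 < γ) :
    ∑ i ∈ s, β i * R i + γ * ρ = 0 ↔ ∑ i ∈ s, R i + ρ = 0 := by
  rw [add_eq_zero_iff_of_nonneg
      (Finset.sum_nonneg fun i hi => mul_nonneg (hβ i hi).le (hR i hi)) (mul_nonneg hγ.le hρ),
    add_eq_zero_iff_of_nonneg (Finset.sum_nonneg hR) hρ,
    Finset.sum_eq_zero_iff_of_nonneg fun i hi => mul_nonneg (hβ i hi).le (hR i hi),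
    Finset.sum_eq_zero_iff_of_nonneg hR]
  exact and_congr (forall₂_congr fun i hi => mul_eq_zero_iff_left (hβ i hi).ne')
    (mul_eq_zero_iff_left hγ.ne')

lemma sum_sum_mul_eq_sum_mul_sum {ι W : Type*} [Fintype ι] [Fintype W] (μ : W → ℝ)
    (X : ι → W → ℝ) : ∑ i, ∑ w, μ w * X i w = ∑ w, μ w * ∑ i, X i w := by
  rw [Finset.sum_comm]
  simp_rw [Finset.mul_sum]

section BayesNet

variable {n : ℕ} {V : Fin n → Type*} (Pa : Fin n → Finset (Fin n))

def parentVals (i : Fin n) (w : ∀ j, V j) : ∀ j : {j // j ∈ Pa i}, V j.1 :=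
  fun j => w j.1

variable {Pa} in
lemma dependsOnPredecessors_parentVals (hPa : ∀ i, ∀ j ∈ Pa i, j < i)
    (k : (i : Fin n) → (∀ j : {j // j ∈ Pa i}, V j.1) → V i → ℝ) :
    DependsOnPredecessors fun i w => k i (parentVals Pa i w) := fun i w w' h => by
  dsimp only
  rw [show parentVals Pa i w = parentVals Pa i w' from funext fun j => h j (hPa i j j.2)]

variable [∀ i, Fintype (V i)] (p : (i : Fin n) → (∀ j : {j // j ∈ Pa i}, V j.1) → V i → ℝ)

def bnDist (w : ∀ j, V j) : ℝ :=
  ∏ i, p i (parentVals Pa i w) (w i)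

def condProb (μ : (∀ j, V j) → ℝ) (i : Fin n) (w : ∀ j, V j) : ℝ :=
  condDist μ (parentVals Pa i) (fun w => w i) (parentVals Pa i w) (w i)

def iDef (μ : (∀ j, V j) → ℝ) : ℝ :=
  (∑ i, condEnt μ (parentVals Pa i) (fun w => w i)) - entropy μ

def CondAbsContinuous (μ : (∀ j, V j) → ℝ) : Prop :=
  ∀ i pa x, 0 < pm2 μ (parentVals Pa i) (fun w => w i) pa x → 0 < p i pa x

/-- The score `⟦M⟧_γ = Inc + γ·IDef` of the PDG of the network. -/
def pdgScore (β : Fin n → ℝ) (γ : ℝ) (μ : (∀ j, V j) → ℝ) : EReal :=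
  (∑ i, (β i : EReal) *
    ∑ pa, (pm μ (parentVals Pa i) pa : EReal) *
      klE (condDist μ (parentVals Pa i) (fun w => w i) pa) (p i pa)) +
  ((γ * iDef Pa μ : ℝ) : EReal)

variable {Pa p} {μ : (∀ j, V j) → ℝ}

lemma bnDist_isDist [∀ i, Nonempty (V i)] (hPa : ∀ i, ∀ j ∈ Pa i, j < i)
    (hp : ∀ i pa, IsDist (p i pa)) : IsDist (bnDist Pa p) :=
  ⟨fun _ => Finset.prod_nonneg fun i _ => (hp i _).1 _,
    sum_prod_kernels_eq_one (dependsOnPredecessors_parentVals hPa p) fun i _ => (hp i _).2⟩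

lemma bnDist_condAbsContinuous (hp : ∀ i pa, IsDist (p i pa)) :
    CondAbsContinuous Pa p (bnDist Pa p) := by
  intro i pa x hpos
  refine ((hp i pa).1 x).lt_of_ne fun h0 => hpos.ne' (Finset.sum_eq_zero fun w _ => ?_)
  split_ifs with hw
  · obtain ⟨rfl, rfl⟩ := hw
    exact Finset.prod_eq_zero (Finset.mem_univ i) h0.symm
  · rfl

lemma condProb_pos (hμ : ∀ w, 0 ≤ μ w) {w : ∀ j, V j} (hw : 0 < μ w) (i : Fin n) :
    0 < condProb Pa μ i w :=
  (condDist_pos_iff _ _ hμ _ _).2 (hw.trans_le (le_pm2 _ _ hμ w))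

lemma CondAbsContinuous.cpd_pos (habs : CondAbsContinuous Pa p μ) (hμ : ∀ w, 0 ≤ μ w)
    {w : ∀ j, V j} (hw : 0 < μ w) (i : Fin n) : 0 < p i (parentVals Pa i w) (w i) :=
  habs i _ _ (hw.trans_le (le_pm2 _ _ hμ w))

lemma iDef_eq_klSum (hμ : ∀ w, 0 ≤ μ w) :
    iDef Pa μ = klSum μ fun w => ∏ i, condProb Pa μ i w := by
  rw [iDef, entropy_eq_sum_mul_neg_log, klSum_eq_sum_mul_log hμ]
  simp_rw [condEnt_eq_sum_mul_neg_log _ _ hμ]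
  rw [sum_sum_mul_eq_sum_mul_sum, ← Finset.sum_sub_distrib]
  refine Finset.sum_congr rfl fun w _ => ?_
  rcases (hμ w).lt_or_eq with hw | hw
  · rw [Real.log_div hw.ne' (Finset.prod_pos fun i _ => condProb_pos hμ hw i).ne',
      Real.log_prod fun i _ => (condProb_pos hμ hw i).ne']
    simp only [condProb, Finset.sum_neg_distrib]
    ring
  · simp [← hw]

lemma iDef_nonneg [∀ i, Nonempty (V i)] (hPa : ∀ i, ∀ j ∈ Pa i, j < i) (hμ : IsDist μ) :
    0 ≤ iDef Pa μ := by
  -- `condDist` is `0` where the parents' marginal vanishes (`x / 0 = 0`): only `≤ 1` holds.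
  have hq : ∑ w, ∏ i, condProb Pa μ i w ≤ 1 := sum_prod_kernels_le_one
    (dependsOnPredecessors_parentVals hPa fun i => condDist μ (parentVals Pa i) (fun w => w i))
    (fun _ _ _ => condDist_nonneg _ _ hμ.1 _ _) fun _ _ => sum_condDist_le_one _ _ _
  have hgibbs := sum_sub_sum_le_klSum (μ := μ) (ν := fun w => ∏ i, condProb Pa μ i w)
    (fun w => Finset.prod_nonneg fun i _ => condDist_nonneg _ _ hμ.1 _ _)
    fun w hw => Finset.prod_pos fun i _ => condProb_pos hμ.1 hw i
  rw [iDef_eq_klSum hμ.1]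
  linarith [hμ.2]

lemma sum_condKL_add_iDef (hμ : ∀ w, 0 ≤ μ w) (habs : CondAbsContinuous Pa p μ) :
    ∑ i, condKL μ (parentVals Pa i) (fun w => w i) (p i) + iDef Pa μ = klSum μ (bnDist Pa p) := by
  have hcondKL : ∀ i, condKL μ (parentVals Pa i) (fun w => w i) (p i)
      = ∑ w, μ w * Real.log (condProb Pa μ i w / p i (parentVals Pa i w) (w i)) :=
    fun i => condKL_eq_sum_mul_log _ _ hμ _
  rw [iDef_eq_klSum hμ, klSum_eq_sum_mul_log hμ, klSum_eq_sum_mul_log hμ,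
    Finset.sum_congr rfl fun i _ => hcondKL i, sum_sum_mul_eq_sum_mul_sum,
    ← Finset.sum_add_distrib]
  refine Finset.sum_congr rfl fun w _ => ?_
  rcases (hμ w).lt_or_eq with hw | hw
  · have hc := fun i => (condProb_pos (Pa := Pa) hμ hw i).ne'
    have hp := fun i => (habs.cpd_pos hμ hw i).ne'
    rw [bnDist, Real.log_div hw.ne' (Finset.prod_ne_zero_iff.2 fun i _ => hp i),
      Real.log_div hw.ne' (Finset.prod_ne_zero_iff.2 fun i _ => hc i),
      Real.log_prod fun i _ => hp i, Real.log_prod fun i _ => hc i,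
      Finset.sum_congr rfl fun i _ => Real.log_div (hc i) (hp i), Finset.sum_sub_distrib]
    ring
  · simp [← hw]

lemma pdgScore_eq_coe (hμ : ∀ w, 0 ≤ μ w) (habs : CondAbsContinuous Pa p μ) (β : Fin n → ℝ)
    (γ : ℝ) : pdgScore Pa p β γ μ = ((∑ i, β i * condKL μ (parentVals Pa i) (fun w => w i) (p i)
      + γ * iDef Pa μ : ℝ) : EReal) := by
  simp_rw [pdgScore, sum_pm_mul_klE_condDist_of_absCont _ _ hμ (habs _), EReal.coe_add,
    EReal.coe_finset_sum, EReal.coe_mul]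

lemma pdgScore_eq_top (hμ : ∀ w, 0 ≤ μ w) (hp : ∀ i pa, IsDist (p i pa)) {β : Fin n → ℝ}
    (hβ : ∀ i, 0 < β i) (γ : ℝ) (habs : ¬ CondAbsContinuous Pa p μ) : pdgScore Pa p β γ μ = ⊤ := by
  obtain ⟨i, pa, x, hpos, hp0⟩ : ∃ i pa x,
      0 < pm2 μ (parentVals Pa i) (fun w => w i) pa x ∧ ¬ 0 < p i pa x := by
    simpa [CondAbsContinuous] using habs
  rw [pdgScore, EReal.sum_eq_top_of_nonneg (fun i _ => EReal.mul_nonneg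
      (EReal.coe_nonneg.2 (hβ i).le) (Finset.sum_nonneg fun pa _ =>
        pm_mul_klE_condDist_nonneg _ _ hμ (hp i pa) pa)) (Finset.mem_univ i)
      (by rw [sum_pm_mul_klE_condDist_eq_top _ _ hμ (hp i) hpos hp0,
        EReal.coe_mul_top_of_pos (hβ i)])]
  exact EReal.top_add_of_ne_bot (EReal.coe_ne_bot _)

variable [∀ i, Nonempty (V i)] (hPa : ∀ i, ∀ j ∈ Pa i, j < i) (hp : ∀ i pa, IsDist (p i pa))
  {β : Fin n → ℝ} (hβ : ∀ i, 0 < β i) {γ : ℝ} (hγ : 0 < γ)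
include hPa hp hβ hγ

lemma pdgScore_eq_zero_iff (hμ : IsDist μ) (habs : CondAbsContinuous Pa p μ) :
    pdgScore Pa p β γ μ = 0 ↔ μ = bnDist Pa p := by
  have hB := bnDist_isDist hPa hp
  rw [pdgScore_eq_coe hμ.1 habs, EReal.coe_eq_zero,
    sum_mul_add_mul_eq_zero_iff (fun i _ => condKL_nonneg _ _ hμ.1 (hp i) (habs i))
      (iDef_nonneg hPa hμ) (fun i _ => hβ i) hγ, sum_condKL_add_iDef hμ.1 habs]
  refine ⟨fun h => ?_, fun h => h ▸ klSum_self _⟩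
  by_contra hne
  exact (klSum_pos_of_sum_eq hμ.1 hB.1 (fun w hw => Finset.prod_pos fun i _ =>
    habs.cpd_pos hμ.1 hw i) (by rw [hμ.2, hB.2]) hne).ne' h

lemma pdgScore_bnDist : pdgScore Pa p β γ (bnDist Pa p) = 0 :=
  (pdgScore_eq_zero_iff hPa hp hβ hγ (bnDist_isDist hPa hp) (bnDist_condAbsContinuous hp)).2 rfl

lemma pdgScore_pos (hμ : IsDist μ) (hne : μ ≠ bnDist Pa p) : 0 < pdgScore Pa p β γ μ := by
  by_cases habs : CondAbsContinuous Pa p μ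
  · refine lt_of_le_of_ne ?_ (Ne.symm ((pdgScore_eq_zero_iff hPa hp hβ hγ hμ habs).not.2 hne))
    rw [pdgScore_eq_coe hμ.1 habs]
    exact EReal.coe_nonneg.2 (add_nonneg (Finset.sum_nonneg fun i _ =>
      mul_nonneg (hβ i).le (condKL_nonneg _ _ hμ.1 (hp i) (habs i)))
      (mul_nonneg hγ.le (iDef_nonneg hPa hμ)))
  · rw [pdgScore_eq_top hμ.1 hp hβ γ habs]
    exact EReal.zero_lt_top

end BayesNet

/-- For a Bayesian network `B` (parents `Pa i ⊆ {j | j < i}`, cpds `p i`), its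
distribution `Pr_B(w) = Π_i p_i(w_i | pa_i(w))` is the unique minimizer of the
associated PDG score `⟦M⟧_γ = Inc + γ·IDef`, for every `γ > 0` and all positive
confidence weights `β`. -/
theorem bn_is_unique_pdg_minimizer {n : ℕ} {V : Fin n → Type*}
    [∀ i, Fintype (V i)] [∀ i, Nonempty (V i)]
    (Pa : Fin n → Finset (Fin n)) (hPa : ∀ i, ∀ j ∈ Pa i, j < i)
    (p : (i : Fin n) → (∀ j : {j // j ∈ Pa i}, V j.1) → V i → ℝ)
    (hp : ∀ i pa, IsDist (p i pa))
    (β : Fin n → ℝ) (hβ : ∀ i, 0 < β i) (γ : ℝ) (hγ : 0 < γ) :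
    let paProj : (i : Fin n) → (∀ j, V j) → (∀ j : {j // j ∈ Pa i}, V j.1) :=
      fun i w j => w j.1
    let PrB : (∀ j, V j) → ℝ := fun w => ∏ i, p i (paProj i w) (w i)
    let score : ((∀ j, V j) → ℝ) → EReal := fun μ =>
      (∑ i, (β i : EReal) *
        ∑ pa, (pm μ (paProj i) pa : EReal) *
          klE (condDist μ (paProj i) (fun w => w i) pa) (p i pa)) +
      ((γ * ((∑ i, condEnt μ (paProj i) (fun w => w i)) - entropy μ) : ℝ) : EReal)
    IsDist PrB ∧ ∀ μ, IsDist μ → μ ≠ PrB → score PrB < score μ := by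
  intro paProj PrB score
  refine ⟨bnDist_isDist hPa hp, fun μ hμ hne => ?_⟩
  change pdgScore Pa p β γ (bnDist Pa p) < pdgScore Pa p β γ μ
  rw [pdgScore_bnDist hPa hp hβ hγ]
  exact pdgScore_pos hPa hp hβ hγ hμ hne
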